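/- Let λ > 0 and let j be an integer with j > ⌈λ⌉. Then the squared L²(ν_0)-norm of the Fourier-Bessel function b_{λ,j} on the closed unit disk satisfies ‖b_{λ,j}‖²_{L²(ν_0)} ≤ 4 ((j+1)/j²) · ( 1/(1 − (λ/j)⁴) + (2/(j+1)) · (λ/j)⁴/(1 − (λ/j)⁴)² ) · J_j(λ)². -/

import Mathlib

open MeasureTheory Metric

/-- Bessel function of the first kind of nonnegative integer order. -/
noncomputable def besselJnat (n : ℕ) (x : ℝ) : ℝ :=
  ∑' k : ℕ, ((-1 : ℝ) ^ k / ((Nat.factorial k : ℝ) * (Nat.factorial (n + k) : ℝ))) *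
    (x / 2) ^ (n + 2 * k)

/-- Bessel function of the first kind of integer order, with `J_{-n} = (-1)^n J_n`. -/
noncomputable def besselJ (n : ℤ) (x : ℝ) : ℝ :=
  if 0 ≤ n then besselJnat n.toNat x else (-1 : ℝ) ^ n.natAbs * besselJnat n.natAbs x

/-- The Fourier-Bessel function `b_{λ,j}(x) = e^{ijθ} J_j(λ r)` on `ℝ² ≃ ℂ`. -/
noncomputable def fourierBessel (lam : ℝ) (j : ℤ) (z : ℂ) : ℂ :=
  Complex.exp (Complex.I * j * z.arg) * besselJ j (lam * ‖z‖)

/-- Normalized uniform measure `dx/π` on the closed unit disk. -/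
noncomputable def unifDisk : Measure ℂ :=
  (ENNReal.ofReal Real.pi)⁻¹ • (volume.restrict (closedBall (0 : ℂ) 1))

/-- Normalized arc-length measure `dσ/(2π)` on the unit circle. -/
noncomputable def circleUnif : Measure ℂ :=
  (ENNReal.ofReal (2 * Real.pi))⁻¹ •
    Measure.map (fun θ : ℝ => Complex.exp (θ * Complex.I))
      (volume.restrict (Set.Ioc (0 : ℝ) (2 * Real.pi)))

/-- The mixed measure `ν_α = (1-α) dx/π + α dσ/(2π)`. -/
noncomputable def nuAlpha (a : ℝ) : Measure ℂ :=
  ENNReal.ofReal (1 - a) • unifDisk + ENNReal.ofReal a • circleUnif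

/-- Squared `L²(ν)` norm of a function. -/
noncomputable def l2normSq (ν : Measure ℂ) (f : ℂ → ℂ) : ℝ :=
  ∫ z, ‖f z‖ ^ 2 ∂ν

/-- A measure on `ℂ` invariant under every rotation about the origin. -/
def RotationInvariant (ν : Measure ℂ) : Prop :=
  ∀ θ : ℝ, Measure.map (fun z : ℂ => Complex.exp (θ * Complex.I) * z) ν = ν

/-- Plane wave `e^{i k·x}` with wave vector `k = λ(cos φ, sin φ)`. -/
noncomputable def planeWaveFn (lam phi : ℝ) (z : ℂ) : ℂ :=
  Complex.exp (Complex.I * ((lam * (Real.cos phi * z.re + Real.sin phi * z.im) : ℝ) : ℂ))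

/-- Angle `φ_l = 2πl/(2m+1)`. -/
noncomputable def phiAngle (m : ℕ) (l : ℤ) : ℝ := 2 * Real.pi * l / (2 * m + 1)

/-- Discretized plane-wave combination
`b_j^m = (1/((2m+1) i^j)) Σ_{l=-m}^m e^{ijφ_l} e_{k_l}`. -/
noncomputable def pwave (lam : ℝ) (m : ℕ) (j : ℤ) (z : ℂ) : ℂ :=
  (1 / (((2 * m + 1 : ℕ) : ℂ) * Complex.I ^ j)) *
    ∑ l ∈ Finset.Icc (-(m : ℤ)) (m : ℤ),
      Complex.exp (Complex.I * j * ((phiAngle m l : ℝ) : ℂ)) * planeWaveFn lam (phiAngle m l) z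

/-- The quantity `K(V_m^b, ν)` for the Fourier-Bessel space on the unit disk. -/
noncomputable def Kb (lam : ℝ) (ν : Measure ℂ) (m : ℕ) : ℝ :=
  ⨆ z : closedBall (0 : ℂ) 1,
    ∑ j ∈ Finset.Icc (-(m : ℤ)) (m : ℤ),
      ‖fourierBessel lam j ↑z‖ ^ 2 / l2normSq ν (fourierBessel lam j)

/-- The quantity `K(V_m^e, ν)` for the plane-wave space on the unit disk. -/
noncomputable def Ke (lam : ℝ) (ν : Measure ℂ) (m : ℕ) : ℝ :=
  ⨆ z : closedBall (0 : ℂ) 1,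
    ∑ j ∈ Finset.Icc (-(m : ℤ)) (m : ℤ),
      ‖pwave lam m j ↑z‖ ^ 2 / l2normSq ν (pwave lam m j)

/-- Laplacian of a function on `ℝ² ≃ ℂ`. -/
noncomputable def laplacian2 (u : ℂ → ℂ) (z : ℂ) : ℂ :=
  fderiv ℝ (fun w => fderiv ℝ u w 1) z 1 + fderiv ℝ (fun w => fderiv ℝ u w Complex.I) z Complex.I

/-!
Polar coordinates turn `‖b_{λ,j}‖²` into `∫₀¹ 2 r J_j(λ r)² dr`. For `0 < y ≤ n` the recurrences
`y J_n' = n J_n - y J_{n+1}` and `y (J_n + J_{n+2}) = 2 (n + 1) J_{n+1}` give, by downward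
induction on the order, `J_n(y) > 0` and `(n + 1) J_{n+1}(y) ≤ y J_n(y)`. Hence, with
`a = n - λ² / (n + 1)`, the function `y ↦ y^(-a) J_n(y)` is nondecreasing on `(0, λ]` whenever
`λ ≤ n`, so `J_n(λ r) ≤ r^a J_n(λ)`. Integrating `2 r^(2a+1)` gives
`‖b_{λ,j}‖² ≤ (j + 1) / ((j + 1)² - λ²) J_j(λ)²`, which is below the stated bound.
-/

open scoped Nat

noncomputable def besselTerm (n k : ℕ) (x : ℝ) : ℝ :=
  ((-1 : ℝ) ^ k / ((k ! : ℝ) * ((n + k)! : ℝ))) * (x / 2) ^ (n + 2 * k)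

-- At `n + 2 * k = 0` the truncated exponent `0 - 1 = 0` is harmless: the coefficient vanishes.
noncomputable def besselTermDeriv (n k : ℕ) (x : ℝ) : ℝ :=
  ((-1 : ℝ) ^ k / ((k ! : ℝ) * ((n + k)! : ℝ))) *
    (((n + 2 * k : ℕ) : ℝ) / 2 * (x / 2) ^ (n + 2 * k - 1))

lemma besselTerm_zero (n : ℕ) (x : ℝ) : besselTerm n 0 x = (x / 2) ^ n / n ! := by
  simp only [besselTerm, pow_zero, Nat.factorial_zero, Nat.cast_one, add_zero, one_mul, mul_zero]
  ring

lemma besselTerm_succ (n k : ℕ) (x : ℝ) :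
    besselTerm n (k + 1) x = -(x ^ 2 / 4 / ((k + 1) * (n + k + 1))) * besselTerm n k x := by
  simp only [besselTerm, show n + (k + 1) = n + k + 1 by ring,
    show n + 2 * (k + 1) = n + 2 * k + 2 by ring, Nat.factorial_succ, pow_succ, pow_add]
  push_cast
  field_simp
  ring

lemma mul_besselTerm (n k : ℕ) (x : ℝ) :
    x * besselTerm n k x = 2 * (n + k + 1) * besselTerm (n + 1) k x := by
  simp only [besselTerm, show n + 1 + k = n + k + 1 by ring,
    show n + 1 + 2 * k = n + 2 * k + 1 by ring, Nat.factorial_succ, pow_succ]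
  push_cast
  field_simp

lemma mul_besselTerm_succ (n k : ℕ) (x : ℝ) :
    x * besselTerm (n + 1) k x = -(2 * (k + 1)) * besselTerm n (k + 1) x := by
  simp only [besselTerm, show n + 1 + k = n + k + 1 by ring, show n + (k + 1) = n + k + 1 by ring,
    show n + 1 + 2 * k = n + 2 * k + 1 by ring, show n + 2 * (k + 1) = n + 2 * k + 1 + 1 by ring,
    Nat.factorial_succ, pow_succ]
  push_cast
  field_simp

lemma mul_besselTermDeriv (n k : ℕ) (x : ℝ) :
    x * besselTermDeriv n k x = (n + 2 * k) * besselTerm n k x := by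
  rcases Nat.eq_zero_or_pos (n + 2 * k) with h | h
  · obtain ⟨rfl, rfl⟩ : n = 0 ∧ k = 0 := by omega
    simp [besselTermDeriv, besselTerm]
  · obtain ⟨m, hm⟩ : ∃ m, n + 2 * k = m + 1 := ⟨n + 2 * k - 1, by omega⟩
    have hm' : (n : ℝ) + 2 * k = m + 1 := mod_cast hm
    simp only [besselTermDeriv, besselTerm, hm, Nat.add_sub_cancel, pow_succ, hm']
    push_cast
    ring

lemma abs_besselTerm_le (n k : ℕ) (x : ℝ) :
    |besselTerm n k x| ≤ (|x| / 2) ^ n / n ! * ((x ^ 2 / 4) ^ k / k !) := by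
  have hfac : (n ! : ℝ) ≤ (n + k)! := mod_cast Nat.factorial_le (Nat.le_add_right n k)
  have hpow : |x / 2| ^ (n + 2 * k) = (|x| / 2) ^ n * (x ^ 2 / 4) ^ k := by
    rw [abs_div, abs_two, pow_add, pow_mul]
    congr 1
    rw [div_pow, sq_abs]
    norm_num
  rw [besselTerm, abs_mul, abs_div, abs_pow, abs_pow, hpow, abs_neg, abs_one, one_pow,
    abs_of_pos (by positivity)]
  calc 1 / ((k ! : ℝ) * (n + k)!) * ((|x| / 2) ^ n * (x ^ 2 / 4) ^ k)
      ≤ 1 / ((k ! : ℝ) * n !) * ((|x| / 2) ^ n * (x ^ 2 / 4) ^ k) := by gcongr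
    _ = (|x| / 2) ^ n / n ! * ((x ^ 2 / 4) ^ k / k !) := by ring

lemma summable_abs_besselTerm (n : ℕ) (x : ℝ) : Summable fun k ↦ |besselTerm n k x| :=
  .of_nonneg_of_le (fun _ ↦ abs_nonneg _) (abs_besselTerm_le n · x)
    ((Real.summable_pow_div_factorial _).mul_left _)

lemma hasSum_besselTerm (n : ℕ) (x : ℝ) : HasSum (besselTerm n · x) (besselJnat n x) :=
  (summable_abs_besselTerm n x).of_abs.hasSum

lemma hasDerivAt_besselTerm (n k : ℕ) (x : ℝ) :
    HasDerivAt (besselTerm n k) (besselTermDeriv n k x) x := by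
  have h : HasDerivAt (fun y : ℝ ↦ (y / 2) ^ (n + 2 * k))
      ((n + 2 * k : ℕ) * (x / 2) ^ (n + 2 * k - 1) * (1 / 2)) x := by
    simpa using ((hasDerivAt_id x).div_const 2).fun_pow (n + 2 * k)
  refine (h.const_mul _).congr_deriv ?_
  rw [besselTermDeriv]
  ring

lemma half_mul_pow_le_pow (m : ℕ) {y R : ℝ} (hR : 1 ≤ R) (hy : |y| ≤ R) :
    (m : ℝ) / 2 * (|y| / 2) ^ (m - 1) ≤ R ^ m := by
  rcases m with _ | p
  · simp
  have hp : ((p + 1 : ℕ) : ℝ) ≤ 2 ^ (p + 1) := mod_cast (Nat.lt_two_pow_self).le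
  calc ((p + 1 : ℕ) : ℝ) / 2 * (|y| / 2) ^ (p + 1 - 1)
      ≤ ((p + 1 : ℕ) : ℝ) / 2 * (R / 2) ^ p := by rw [Nat.add_sub_cancel]; gcongr
    _ = ((p + 1 : ℕ) : ℝ) / 2 ^ (p + 1) * R ^ p := by rw [div_pow, pow_succ]; ring
    _ ≤ 1 * R ^ p := by gcongr; rwa [div_le_one (by positivity)]
    _ ≤ R ^ (p + 1) := by rw [one_mul]; exact pow_le_pow_right₀ hR p.le_succ

lemma abs_besselTermDeriv_le (n k : ℕ) {y R : ℝ} (hR : 1 ≤ R) (hy : |y| ≤ R) :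
    |besselTermDeriv n k y| ≤ |besselTerm n k (2 * R)| := by
  simp only [besselTermDeriv, besselTerm, abs_mul, abs_div, abs_pow, Nat.abs_cast, abs_two,
    mul_div_cancel_left₀ R two_ne_zero, abs_of_nonneg (by linarith : (0 : ℝ) ≤ R)]
  gcongr
  exact half_mul_pow_le_pow _ hR hy

lemma summable_besselTermDeriv (n : ℕ) (x : ℝ) : Summable (besselTermDeriv n · x) :=
  .of_norm_bounded (summable_abs_besselTerm n (2 * (|x| + 1)))
    fun k ↦ abs_besselTermDeriv_le n k (by linarith [abs_nonneg x]) (by linarith)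

lemma hasDerivAt_besselJnat (n : ℕ) (x : ℝ) :
    HasDerivAt (besselJnat n) (∑' k, besselTermDeriv n k x) x := by
  have hbound : ∀ k, ∀ y ∈ ball x 1,
      ‖besselTermDeriv n k y‖ ≤ |besselTerm n k (2 * (|x| + 1))| := by
    intro k y hy
    have : |y - x| < 1 := by simpa [Real.dist_eq] using hy
    exact abs_besselTermDeriv_le n k (by linarith [abs_nonneg x])
      (by linarith [abs_sub_abs_le_abs_sub y x])
  exact hasDerivAt_tsum_of_isPreconnected (summable_abs_besselTerm n _) isOpen_ball
    (convex_ball x 1).isPreconnected (fun k y _ ↦ hasDerivAt_besselTerm n k y) hbound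
    (mem_ball_self one_pos) (hasSum_besselTerm n x).summable (mem_ball_self one_pos)

lemma differentiable_besselJnat (n : ℕ) : Differentiable ℝ (besselJnat n) :=
  fun x ↦ (hasDerivAt_besselJnat n x).differentiableAt

lemma hasSum_two_mul_besselTerm (n : ℕ) (x : ℝ) :
    HasSum (fun k : ℕ ↦ 2 * k * besselTerm n k x) (-(x * besselJnat (n + 1) x)) := by
  have hshift : HasSum (fun k : ℕ ↦ 2 * ((k + 1 : ℕ) : ℝ) * besselTerm n (k + 1) x)
      (-(x * besselJnat (n + 1) x)) := by
    refine ((hasSum_besselTerm (n + 1) x).mul_left x).neg.congr_fun fun k ↦ ?_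
    rw [mul_besselTerm_succ]
    push_cast
    ring
  simpa using (hasSum_nat_add_iff (f := fun k : ℕ ↦ 2 * (k : ℝ) * besselTerm n k x) 1).mp hshift

lemma besselJnat_recurrence (n : ℕ) (x : ℝ) :
    x * besselJnat n x + x * besselJnat (n + 2) x = 2 * (n + 1) * besselJnat (n + 1) x := by
  have h := ((hasSum_besselTerm n x).mul_left x).sub
    ((hasSum_besselTerm (n + 1) x).mul_left (2 * ((n : ℝ) + 1)))
  have h' : HasSum (fun k : ℕ ↦ 2 * k * besselTerm (n + 1) k x)
      (x * besselJnat n x - 2 * (n + 1) * besselJnat (n + 1) x) := by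
    refine h.congr_fun fun k ↦ ?_
    rw [mul_besselTerm]
    ring
  linarith [h'.unique (hasSum_two_mul_besselTerm (n + 1) x)]

lemma mul_deriv_besselJnat (n : ℕ) (x : ℝ) :
    x * deriv (besselJnat n) x = n * besselJnat n x - x * besselJnat (n + 1) x := by
  rw [(hasDerivAt_besselJnat n x).deriv]
  have h := ((summable_besselTermDeriv n x).hasSum.mul_left x).sub
    ((hasSum_besselTerm n x).mul_left (n : ℝ))
  have h' : HasSum (fun k : ℕ ↦ 2 * k * besselTerm n k x)
      (x * ∑' k, besselTermDeriv n k x - n * besselJnat n x) := by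
    refine h.congr_fun fun k ↦ ?_
    rw [mul_besselTermDeriv]
    ring
  linarith [h'.unique (hasSum_two_mul_besselTerm n x)]

lemma abs_besselTerm_le_geometric (n : ℕ) {x : ℝ} (h : 2 * x ^ 2 ≤ n + 1) (k : ℕ) :
    |besselTerm n k x| ≤ |besselTerm n 0 x| * (1 / 8) ^ k := by
  induction k with
  | zero => simp
  | succ k ih =>
    have hratio : x ^ 2 / 4 / ((k + 1) * (n + k + 1)) ≤ 1 / 8 := by
      rw [div_le_iff₀ (by positivity)]
      nlinarith [(k.cast_nonneg : (0 : ℝ) ≤ k), (n.cast_nonneg : (0 : ℝ) ≤ n)]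
    rw [besselTerm_succ, abs_mul, abs_neg, abs_of_nonneg (by positivity)]
    calc _ ≤ 1 / 8 * (|besselTerm n 0 x| * (1 / 8) ^ k) := by gcongr
      _ = |besselTerm n 0 x| * (1 / 8) ^ (k + 1) := by ring

lemma abs_besselJnat_sub_besselTerm_zero_le (n : ℕ) {x : ℝ} (h : 2 * x ^ 2 ≤ n + 1) :
    |besselJnat n x - besselTerm n 0 x| ≤ |besselTerm n 0 x| / 7 := by
  have htail : HasSum (fun k ↦ besselTerm n (k + 1) x) (besselJnat n x - besselTerm n 0 x) := by
    simpa using (hasSum_nat_add_iff' 1).mpr (hasSum_besselTerm n x)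
  have hgeom : HasSum (fun k : ℕ ↦ |besselTerm n 0 x| / 8 * (1 / 8) ^ k)
      (|besselTerm n 0 x| / 7) := by
    have h := (hasSum_geometric_of_lt_one (r := 1 / 8) (by norm_num) (by norm_num)).mul_left
      (|besselTerm n 0 x| / 8)
    rwa [show |besselTerm n 0 x| / 8 * (1 - 1 / 8)⁻¹ = |besselTerm n 0 x| / 7 by ring] at h
  have hbound (k : ℕ) : |besselTerm n (k + 1) x| ≤ |besselTerm n 0 x| / 8 * (1 / 8) ^ k := by
    have := abs_besselTerm_le_geometric n h (k + 1)
    rw [pow_succ] at this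
    linarith
  exact abs_le.mpr ⟨hasSum_le (fun k ↦ by linarith [(abs_le.mp (hbound k)).1]) hgeom.neg htail,
    hasSum_le (fun k ↦ (abs_le.mp (hbound k)).2) htail hgeom⟩

lemma besselJnat_pos_and_succ_le_of_sq_le (n : ℕ) {x : ℝ} (hx : 0 < x) (h : 2 * x ^ 2 ≤ n + 1) :
    0 < besselJnat n x ∧ (n + 1) * besselJnat (n + 1) x ≤ x * besselJnat n x := by
  have ht : 0 < besselTerm n 0 x := by rw [besselTerm_zero]; positivity
  have ht' : 0 < besselTerm (n + 1) 0 x := by rw [besselTerm_zero]; positivity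
  have hJ := abs_le.mp (abs_besselJnat_sub_besselTerm_zero_le n h)
  have hJ' := abs_le.mp
    (abs_besselJnat_sub_besselTerm_zero_le (n + 1) (x := x) (by push_cast; linarith))
  rw [abs_of_pos ht] at hJ
  rw [abs_of_pos ht'] at hJ'
  have hrel := mul_besselTerm n 0 x
  push_cast at hrel
  refine ⟨by linarith, ?_⟩
  nlinarith [mul_le_mul_of_nonneg_left hJ'.2 (by positivity : (0 : ℝ) ≤ n + 1),
    mul_le_mul_of_nonneg_left hJ.1 hx.le]

lemma besselJnat_pos_and_succ_le_of_succ (n : ℕ) {x : ℝ} (hx : 0 < x) (hxn : x ≤ n)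
    (h : 0 < besselJnat (n + 1) x ∧
      (n + 1 + 1) * besselJnat (n + 2) x ≤ x * besselJnat (n + 1) x) :
    0 < besselJnat n x ∧ (n + 1) * besselJnat (n + 1) x ≤ x * besselJnat n x := by
  obtain ⟨hpos, hratio⟩ := h
  have hx2 : x * x ≤ (n + 1) * (n + 2) := by nlinarith
  have hnext :
      (n + 2) * (x * besselJnat (n + 2) x) ≤ (n + 2) * ((n + 1) * besselJnat (n + 1) x) := by
    nlinarith [mul_le_mul_of_nonneg_left hratio hx.le, mul_le_mul_of_nonneg_right hx2 hpos.le]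
  have hnext' := le_of_mul_le_mul_left hnext (by positivity)
  have hrec := besselJnat_recurrence n x
  have hsucc : (n + 1) * besselJnat (n + 1) x ≤ x * besselJnat n x := by linarith
  have hpos' : (0 : ℝ) < (n + 1) * besselJnat (n + 1) x := by positivity
  exact ⟨pos_of_mul_pos_right (hpos'.trans_le hsucc) hx.le, hsucc⟩

/-- Downward induction on the order, starting from the regime `2 x² ≤ n + 1` where the series is
dominated by its first term. -/
lemma besselJnat_pos_and_succ_le (n : ℕ) {x : ℝ} (hx : 0 < x) (hxn : x ≤ n) :
    0 < besselJnat n x ∧ (n + 1) * besselJnat (n + 1) x ≤ x * besselJnat n x := by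
  set N := max n ⌈2 * x ^ 2⌉₊
  have hN : 2 * x ^ 2 ≤ N + 1 := by
    have : (⌈2 * x ^ 2⌉₊ : ℝ) ≤ N := mod_cast le_max_right _ _
    linarith [Nat.le_ceil (2 * x ^ 2)]
  refine Nat.decreasingInduction (motive := fun m _ ↦ x ≤ m →
      0 < besselJnat m x ∧ (m + 1) * besselJnat (m + 1) x ≤ x * besselJnat m x)
    (fun m _ ih hxm ↦ besselJnat_pos_and_succ_le_of_succ m hx hxm
      (by exact_mod_cast ih (by push_cast; linarith)))
    (fun _ ↦ besselJnat_pos_and_succ_le_of_sq_le N hx hN) (le_max_left _ _) hxn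

lemma besselJnat_mul_le_rpow_mul (n : ℕ) {lam r : ℝ} (hlam : 0 < lam) (hlamn : lam ≤ n)
    (hr0 : 0 < r) (hr1 : r ≤ 1) :
    besselJnat n (lam * r) ≤ r ^ ((n : ℝ) - lam ^ 2 / (n + 1)) * besselJnat n lam := by
  set a : ℝ := n - lam ^ 2 / (n + 1)
  set J := besselJnat n
  have hlr : 0 < lam * r := by positivity
  have hpos_of_mem {y : ℝ} (hy : y ∈ Set.Icc (lam * r) lam) : 0 < y := hlr.trans_le hy.1
  -- `y ↦ J y * y ^ (-a)` is nondecreasing on `[λ r, λ]`: its derivative has the sign of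
  -- `y J' - a J = (λ² J - (n + 1) y J_{n+1}) / (n + 1) ≥ (λ² - y²) J / (n + 1)`.
  have hmono : MonotoneOn (fun y ↦ J y * y ^ (-a)) (Set.Icc (lam * r) lam) := by
    refine monotoneOn_of_hasDerivWithinAt_nonneg (convex_Icc _ _)
      (f' := fun y ↦ deriv J y * y ^ (-a) + J y * (-a * y ^ (-a - 1))) ?_ ?_ ?_
    · exact (differentiable_besselJnat n).continuous.continuousOn.mul fun y hy ↦
        (Real.continuousAt_rpow_const y (-a) (Or.inl (hpos_of_mem hy).ne')).continuousWithinAt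
    · intro y hy
      exact ((differentiable_besselJnat n y).hasDerivAt.mul (Real.hasDerivAt_rpow_const
        (Or.inl (hpos_of_mem (interior_subset hy)).ne'))).hasDerivWithinAt
    · intro y hy
      rw [interior_Icc] at hy
      have hy0 : 0 < y := hlr.trans hy.1
      obtain ⟨hJ, hratio⟩ := besselJnat_pos_and_succ_le n hy0 (by linarith [hy.2])
      have hsign : 0 ≤ (n + 1) * (y * deriv J y - a * J y) := by
        have hderiv := mul_deriv_besselJnat n y
        have ha : (n + 1) * a = (n + 1) * n - lam ^ 2 := by simp only [a]; field_simp
        nlinarith [mul_le_mul_of_nonneg_right (mul_self_le_mul_self hy0.le hy.2.le) hJ.le,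
          mul_le_mul_of_nonneg_left hratio hy0.le]
      have hsplit : y ^ (-a) = y ^ (-a - 1) * y := by
        rw [← Real.rpow_add_one hy0.ne']
        ring_nf
      calc (0 : ℝ) ≤ y ^ (-a - 1) * (y * deriv J y - a * J y) := mul_nonneg
            (Real.rpow_nonneg hy0.le _) (nonneg_of_mul_nonneg_right hsign (by positivity))
        _ = _ := by rw [hsplit]; ring
  have hend := hmono ⟨le_rfl, by nlinarith⟩ ⟨by nlinarith, le_rfl⟩ (by nlinarith)
  simp only at hend
  rw [Real.rpow_neg hlr.le, Real.rpow_neg hlam.le, Real.mul_rpow hlam.le hr0.le] at hend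
  have hla : 0 < lam ^ a := Real.rpow_pos_of_pos hlam a
  have hra : 0 < r ^ a := Real.rpow_pos_of_pos hr0 a
  calc J (lam * r) = J (lam * r) * (lam ^ a * r ^ a)⁻¹ * (lam ^ a * r ^ a) := by field_simp
    _ ≤ J lam * (lam ^ a)⁻¹ * (lam ^ a * r ^ a) := by gcongr
    _ = r ^ a * J lam := by field_simp

lemma integral_mul_besselJnat_sq_le (n : ℕ) {lam : ℝ} (hlam : 0 < lam) (hlamn : lam ≤ n) :
    ∫ r in (0 : ℝ)..1, 2 * r * besselJnat n (lam * r) ^ 2 ≤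
      (n + 1) / ((n + 1) ^ 2 - lam ^ 2) * besselJnat n lam ^ 2 := by
  set a : ℝ := n - lam ^ 2 / (n + 1)
  set J := besselJnat n
  have hsq : lam ^ 2 ≤ (n : ℝ) ^ 2 := pow_le_pow_left₀ hlam.le hlamn 2
  have ha1 : a + 1 = ((n + 1) ^ 2 - lam ^ 2) / (n + 1) := by simp only [a]; field_simp; ring
  have ha : 0 < a + 1 := by rw [ha1]; apply div_pos <;> nlinarith
  have hpt : ∀ r ∈ Set.Icc (0 : ℝ) 1,
      2 * r * J (lam * r) ^ 2 ≤ 2 * J lam ^ 2 * r ^ (2 * a + 1) := by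
    rintro r ⟨hr0, hr1⟩
    rcases hr0.eq_or_lt with rfl | hr0
    · simp only [mul_zero, zero_mul]
      positivity
    have hJ := (besselJnat_pos_and_succ_le n (x := lam * r) (by positivity) (by nlinarith)).1
    have hbound := pow_le_pow_left₀ hJ.le (besselJnat_mul_le_rpow_mul n hlam hlamn hr0 hr1) 2
    calc 2 * r * J (lam * r) ^ 2 ≤ 2 * r * (r ^ a * J lam) ^ 2 := by gcongr
      _ = 2 * J lam ^ 2 * r ^ (2 * a + 1) := by
        rw [Real.rpow_add_one hr0.ne', mul_comm 2 a, Real.rpow_mul hr0.le, Real.rpow_two]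
        ring
  have hint : ∫ r in (0 : ℝ)..1, 2 * J lam ^ 2 * r ^ (2 * a + 1) = J lam ^ 2 / (a + 1) := by
    rw [intervalIntegral.integral_const_mul, integral_rpow (Or.inl (by linarith)), Real.one_rpow,
      Real.zero_rpow (by linarith), show 2 * a + 1 + 1 = 2 * (a + 1) by ring]
    field_simp
    ring
  have hJc : Continuous fun r ↦ 2 * r * J (lam * r) ^ 2 := by
    have := (differentiable_besselJnat n).continuous
    fun_prop
  calc ∫ r in (0 : ℝ)..1, 2 * r * J (lam * r) ^ 2
      ≤ ∫ r in (0 : ℝ)..1, 2 * J lam ^ 2 * r ^ (2 * a + 1) :=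
        intervalIntegral.integral_mono_on zero_le_one (hJc.intervalIntegrable 0 1)
          ((intervalIntegral.intervalIntegrable_rpow' (by linarith)).const_mul _) hpt
    _ = (n + 1) / ((n + 1) ^ 2 - lam ^ 2) * J lam ^ 2 := by
        rw [hint, ha1]
        field_simp

lemma integral_unifDisk_comp_norm (g : ℝ → ℝ) :
    ∫ z, g ‖z‖ ∂unifDisk = ∫ r in (0 : ℝ)..1, 2 * r * g r := by
  have hball : closedBall (0 : ℂ) 1 = norm ⁻¹' Set.Iic 1 := by ext z; simp
  have hvol : volume.real (ball (0 : ℂ) 1) = Real.pi := by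
    simp [measureReal_def, Complex.volume_ball]
  have hradial :
      ∫ z in closedBall (0 : ℂ) 1, g ‖z‖ = ∫ z : ℂ, (Set.Iic 1).indicator g ‖z‖ := by
    rw [← integral_indicator measurableSet_closedBall, hball]
    rfl
  have hIoi : ∫ y in Set.Ioi (0 : ℝ), y ^ (2 - 1) • (Set.Iic 1).indicator g y =
      (∫ r in (0 : ℝ)..1, 2 * r * g r) / 2 := by
    have hind : (fun y : ℝ ↦ y ^ (2 - 1) • (Set.Iic 1).indicator g y) =
        (Set.Iic 1).indicator fun r ↦ r * g r :=
      funext fun y ↦ by simpa using (Set.indicator_mul_right _ (fun r ↦ r) g).symm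
    simp_rw [hind, mul_assoc, intervalIntegral.integral_const_mul]
    rw [integral_indicator measurableSet_Iic, Measure.restrict_restrict measurableSet_Iic,
      Set.Iic_inter_Ioi, intervalIntegral.integral_of_le zero_le_one]
    ring
  rw [unifDisk, integral_smul_measure, hradial, integral_fun_norm_addHaar,
    Complex.finrank_real_complex, hvol, hIoi, ENNReal.toReal_inv,
    ENNReal.toReal_ofReal Real.pi_pos.le, nsmul_eq_mul, smul_eq_mul, smul_eq_mul, Nat.cast_ofNat]
  field_simp

lemma norm_fourierBessel (lam : ℝ) (j : ℤ) (z : ℂ) :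
    ‖fourierBessel lam j z‖ = |besselJ j (lam * ‖z‖)| := by
  rw [fourierBessel, norm_mul, Complex.norm_exp, Complex.norm_real, Real.norm_eq_abs]
  simp [Complex.mul_re]

lemma l2normSq_unifDisk_fourierBessel (lam : ℝ) (j : ℤ) :
    l2normSq unifDisk (fourierBessel lam j) =
      ∫ r in (0 : ℝ)..1, 2 * r * besselJ j (lam * r) ^ 2 := by
  simp_rw [l2normSq, norm_fourierBessel, sq_abs]
  exact integral_unifDisk_comp_norm fun r ↦ besselJ j (lam * r) ^ 2

lemma besselJ_natCast (n : ℕ) (x : ℝ) : besselJ n x = besselJnat n x := by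
  simp [besselJ]

lemma add_one_div_add_one_sq_sub_sq_le {N L : ℝ} (hL : 0 ≤ L) (hLN : L < N) :
    (N + 1) / ((N + 1) ^ 2 - L ^ 2) ≤
      4 * ((N + 1) / N ^ 2) *
        (1 / (1 - (L / N) ^ 4) + 2 / (N + 1) * ((L / N) ^ 4 / (1 - (L / N) ^ 4) ^ 2)) := by
  have hN : 0 < N := hL.trans_lt hLN
  have hsq : L ^ 2 < N ^ 2 := pow_lt_pow_left₀ hLN hL two_ne_zero
  have hq : 1 - (L / N) ^ 4 = (N ^ 4 - L ^ 4) / N ^ 4 := by field_simp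
  have hq0 : 0 < N ^ 4 - L ^ 4 := by nlinarith
  have hmain :
      (N + 1) / ((N + 1) ^ 2 - L ^ 2) ≤ 4 * ((N + 1) / N ^ 2) * (1 / (1 - (L / N) ^ 4)) := by
    rw [hq, div_le_iff₀ (by nlinarith)]
    field_simp
    nlinarith [mul_le_mul_of_nonneg_left hsq.le (sq_nonneg N)]
  have hrest :
      0 ≤ 4 * ((N + 1) / N ^ 2) * (2 / (N + 1) * ((L / N) ^ 4 / (1 - (L / N) ^ 4) ^ 2)) := by
    positivity
  linarith

/-- For `j > ⌈λ⌉`,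
`‖b_{λ,j}‖²_{L²(ν₀)} ≤ 4 ((j+1)/j²) (1/(1-(λ/j)⁴) + (2/(j+1)) (λ/j)⁴/(1-(λ/j)⁴)²) J_j(λ)²`. -/
theorem stmt_5 (lam : ℝ) (hlam : 0 < lam) (j : ℤ) (hj : ⌈lam⌉ < j) :
    l2normSq unifDisk (fourierBessel lam j) ≤
      4 * (((j : ℝ) + 1) / (j : ℝ) ^ 2) *
        (1 / (1 - (lam / (j : ℝ)) ^ 4) +
          (2 / ((j : ℝ) + 1)) * ((lam / (j : ℝ)) ^ 4 / (1 - (lam / (j : ℝ)) ^ 4) ^ 2)) *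
        (besselJ j lam) ^ 2 := by
  have hlamj : lam < j := (Int.le_ceil lam).trans_lt (mod_cast hj)
  lift j to ℕ using (by exact_mod_cast (hlam.trans hlamj).le)
  rw [l2normSq_unifDisk_fourierBessel]
  simp only [besselJ_natCast, Int.cast_natCast] at hlamj ⊢
  calc ∫ r in (0 : ℝ)..1, 2 * r * besselJnat j (lam * r) ^ 2
      ≤ (j + 1) / ((j + 1) ^ 2 - lam ^ 2) * besselJnat j lam ^ 2 :=
        integral_mul_besselJnat_sq_le j hlam hlamj.le
    _ ≤ _ :=
        mul_le_mul_of_nonneg_right (add_one_div_add_one_sq_sub_sq_le hlam.le hlamj) (sq_nonneg _)
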